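/- arXiv:1708.00905 — 3 statements merged into one kernel-verified Lean document; each statement's English description precedes it below -/
import Mathlib

section
/- The function f(x) = (1+x)^(−1/x) is monotonically increasing on (0, ∞). -/
open Real Set

/-- This is the slope of the secant of the strictly concave `log` through `1` and `1 + x`. -/
theorem strictAntiOn_log_one_add_div_self :
    StrictAntiOn (fun x : ℝ => log (1 + x) / x) (Ioi (-1) \ {0}) := by
  rintro x ⟨hx, hx0⟩ y ⟨hy, hy0⟩ hxy
  have hx1 : 1 + x ∈ Ioi (0 : ℝ) := by simp only [mem_Ioi] at hx ⊢; linarith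
  have hy1 : 1 + y ∈ Ioi (0 : ℝ) := by simp only [mem_Ioi] at hy ⊢; linarith
  have hslope := strictConcaveOn_log_Ioi.secant_strict_mono (mem_Ioi.2 one_pos) hx1 hy1
    (by simpa using hx0) (by simpa using hy0) (by linarith)
  simpa only [log_one, sub_zero, add_sub_cancel_left] using hslope

theorem f_strictMonoOn :
    StrictMonoOn (fun x : ℝ => Real.exp (-Real.log (1 + x) / x)) (Set.Ioi 0) := by
  have hsub : Ioi (0 : ℝ) ⊆ Ioi (-1) \ {0} := fun x (hx : 0 < x) =>
    ⟨show -1 < x by linarith, hx.ne'⟩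
  intro x hx y hy hxy
  simp only [neg_div, exp_lt_exp, neg_lt_neg_iff]
  exact strictAntiOn_log_one_add_div_self (hsub hx) (hsub hy) hxy
end

section
/- Let c₁, c₂ be constants with 0 < c₁ < c₂ and let w ∈ (0,1). Define ξ(τ) = (1−w)·(1 − e^(−c₁/(τ−s))·K) + w·e^(−c₂/(τ−s))·K for τ > s, where K > 0. Then ξ'(τ) = 0 at exactly one point τ‡ = (c₂−c₁)/ln((w/(1−w))·(c₂/c₁)) + s, provided (w/(1−w))·(c₂/c₁) > 1; moreover ξ'(τ) < 0 for τ < τ‡ and ξ'(τ) > 0 for τ > τ‡, so τ‡ is the unique minimizer of ξ on (s, ∞). -/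
/-!
With `u = τ - s`, `A = w c₂`, `B = (1 - w) c₁` and `L = log (A / B) > 0`,
`ξ'(τ) = K / u² · (A e^{-c₂/u} - B e^{-c₁/u}) = K B e^{-c₁/u} / u² · (e^{L - (c₂ - c₁)/u} - 1)`,
and `L - (c₂ - c₁)/u = (L / u) (τ - τ‡)`. Hence `ξ'(τ)` has the sign of `τ - τ‡`, so `ξ` strictly
decreases on `(s, τ‡]` and strictly increases on `[τ‡, ∞)`.
-/

open Real Set

lemma hasDerivAt_exp_neg_div_sub (c s : ℝ) {x : ℝ} (hx : x ≠ s) :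
    HasDerivAt (fun y => exp (-c / (y - s))) (exp (-c / (x - s)) * (c / (x - s) ^ 2)) x := by
  have hinv : HasDerivAt (fun y => -c / (y - s)) (c / (x - s) ^ 2) x :=
    ((hasDerivAt_const x (-c)).div ((hasDerivAt_id x).sub_const s) (sub_ne_zero.2 hx)).congr_deriv
      (by simp)
  exact hinv.exp

lemma sign_mul_of_pos {P : ℝ} (hP : 0 < P) (x : ℝ) : SignType.sign (P * x) = SignType.sign x := by
  rw [sign_mul, sign_pos hP, one_mul]

lemma sign_exp_sub_one (x : ℝ) : SignType.sign (exp x - 1) = SignType.sign x := by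
  rcases lt_trichotomy x 0 with hx | rfl | hx
  · rw [sign_neg hx, sign_neg (sub_neg.2 (exp_lt_one_iff.2 hx))]
  · simp
  · rw [sign_pos hx, sign_pos (sub_pos.2 (one_lt_exp_iff.2 hx))]

lemma mul_exp_neg_div_sub_mul_exp_neg_div {A B : ℝ} (hA : 0 < A) (hB : 0 < B) (a b u : ℝ) :
    A * exp (-b / u) - B * exp (-a / u) =
      B * exp (-a / u) * (exp (log (A / B) - (b - a) / u) - 1) := by
  have hb : exp (-b / u) = exp (-a / u) * exp (-((b - a) / u)) := by
    rw [← exp_add]; congr 1; ring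
  rw [hb, sub_eq_add_neg _ ((b - a) / u), exp_add, exp_log (div_pos hA hB)]
  field_simp

lemma lt_of_deriv_neg_of_deriv_pos {f : ℝ → ℝ} {s t : ℝ} (hst : s < t)
    (hf : ContinuousOn f (Ioi s)) (hneg : ∀ x ∈ Ioo s t, deriv f x < 0)
    (hpos : ∀ x ∈ Ioi t, 0 < deriv f x) {x : ℝ} (hx : x ∈ Ioi s) (hxt : x ≠ t) :
    f t < f x := by
  rcases hxt.lt_or_gt with hlt | hgt
  · have hanti : StrictAntiOn f (Ioc s t) :=
      strictAntiOn_of_deriv_neg (convex_Ioc s t) (hf.mono Ioc_subset_Ioi_self)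
        (by simpa only [interior_Ioc] using hneg)
    exact hanti ⟨hx, hlt.le⟩ ⟨hst, le_rfl⟩ hlt
  · have hmono : StrictMonoOn f (Ici t) :=
      strictMonoOn_of_deriv_pos (convex_Ici t) (hf.mono (Ici_subset_Ioi.2 hst))
        (by simpa only [interior_Ici] using hpos)
    exact hmono self_mem_Ici hgt.le hgt

noncomputable def detectionError (s K c₁ c₂ w τ : ℝ) : ℝ :=
  (1 - w) * (1 - exp (-c₁ / (τ - s)) * K) + w * exp (-c₂ / (τ - s)) * K

lemma hasDerivAt_detectionError (s K c₁ c₂ w : ℝ) {τ : ℝ} (hτ : τ ≠ s) :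
    HasDerivAt (detectionError s K c₁ c₂ w)
      (K / (τ - s) ^ 2 *
        (w * c₂ * exp (-c₂ / (τ - s)) - (1 - w) * c₁ * exp (-c₁ / (τ - s)))) τ :=
  ((((hasDerivAt_exp_neg_div_sub c₁ s hτ).mul_const K).const_sub 1).const_mul (1 - w)
    |>.add (((hasDerivAt_exp_neg_div_sub c₂ s hτ).const_mul w).mul_const K)).congr_deriv (by ring)

lemma sign_deriv_detectionError {s K c₁ c₂ w : ℝ} (hK : 0 < K) (hc₁ : 0 < c₁)
    (hc₂ : 0 < c₂) (hw₀ : 0 < w) (hw₁ : w < 1) (hcond : 1 < w / (1 - w) * (c₂ / c₁))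
    {τ : ℝ} (hτ : s < τ) :
    SignType.sign (deriv (detectionError s K c₁ c₂ w) τ) =
      SignType.sign (τ - ((c₂ - c₁) / log (w / (1 - w) * (c₂ / c₁)) + s)) := by
  have hu : 0 < τ - s := sub_pos.2 hτ
  have hB : 0 < (1 - w) * c₁ := mul_pos (sub_pos.2 hw₁) hc₁
  rw [(hasDerivAt_detectionError s K c₁ c₂ w hτ.ne').deriv,
    mul_exp_neg_div_sub_mul_exp_neg_div (mul_pos hw₀ hc₂) hB, ← mul_assoc,
    sign_mul_of_pos (by positivity), sign_exp_sub_one, div_mul_div_comm]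
  set L := log (w * c₂ / ((1 - w) * c₁))
  have hL : 0 < L := log_pos (by rwa [← div_mul_div_comm])
  rw [show L - (c₂ - c₁) / (τ - s) = L / (τ - s) * (τ - ((c₂ - c₁) / L + s)) by
    field_simp; ring, sign_mul_of_pos (div_pos hL hu)]

theorem unique_minimizer (s K c₁ c₂ w : ℝ) (hK : 0 < K)
    (hc₁ : 0 < c₁) (hc : c₁ < c₂) (hw : w ∈ Set.Ioo (0 : ℝ) 1)
    (hcond : 1 < w / (1 - w) * (c₂ / c₁))
    (ξ : ℝ → ℝ)
    (hξ : ∀ τ : ℝ, ξ τ = (1 - w) * (1 - Real.exp (-c₁ / (τ - s)) * K) +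
      w * Real.exp (-c₂ / (τ - s)) * K)
    (τd : ℝ) (hτd : τd = (c₂ - c₁) / Real.log (w / (1 - w) * (c₂ / c₁)) + s) :
    (∀ τ ∈ Set.Ioi s, deriv ξ τ = 0 ↔ τ = τd) ∧
    (∀ τ ∈ Set.Ioo s τd, deriv ξ τ < 0) ∧
    (∀ τ ∈ Set.Ioi τd, 0 < deriv ξ τ) ∧
    (∀ τ ∈ Set.Ioi s, τ ≠ τd → ξ τd < ξ τ) := by
  obtain ⟨hw₀, hw₁⟩ := hw
  obtain rfl : ξ = detectionError s K c₁ c₂ w := funext hξ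
  have hsign : ∀ τ ∈ Ioi s, SignType.sign (deriv (detectionError s K c₁ c₂ w) τ) =
      SignType.sign (τ - τd) := fun τ hτ =>
    hτd ▸ sign_deriv_detectionError hK hc₁ (hc₁.trans hc) hw₀ hw₁ hcond hτ
  have hsτd : s < τd := hτd ▸ lt_add_of_pos_left s (div_pos (sub_pos.2 hc) (log_pos hcond))
  have hneg : ∀ τ ∈ Ioo s τd, deriv (detectionError s K c₁ c₂ w) τ < 0 := fun τ hτ =>
    sign_eq_neg_one_iff.1 <| by rw [hsign τ hτ.1, sign_neg (sub_neg.2 hτ.2)]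
  have hpos : ∀ τ ∈ Ioi τd, 0 < deriv (detectionError s K c₁ c₂ w) τ := fun τ hτ =>
    sign_eq_one_iff.1 <| by rw [hsign τ (hsτd.trans hτ), sign_pos (sub_pos.2 hτ)]
  have hcont : ContinuousOn (detectionError s K c₁ c₂ w) (Ioi s) := fun τ hτ =>
    (hasDerivAt_detectionError s K c₁ c₂ w (ne_of_gt hτ)).continuousAt.continuousWithinAt
  refine ⟨fun τ hτ => ?_, hneg, hpos,
    fun τ hτ => lt_of_deriv_neg_of_deriv_pos hsτd hcont hneg hpos hτ⟩
  rw [← _root_.sign_eq_zero_iff, hsign τ hτ, _root_.sign_eq_zero_iff, sub_eq_zero]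
end

section
/- For Q > 0 and positive constants φ, μ, σ², the product F(Q) = (1 − φμσ²/(φμσ² + (φμ+1)Q)) · (1 + (φμ+1)Q/(φμσ²))^(−φμσ²/((φμ+1)Q)) is strictly increasing in Q, tends to 0 as Q → 0⁺, and tends to 1 as Q → ∞. Consequently, for each ε ∈ (0, 1/2) there exists a unique Q^ε > 0 with F(Q^ε) = 2ε. -/
/-!
Substituting `t = (φμ + 1) Q / (φμσ)` turns `F` into `t / (1 + t) · (1 + t) ^ (-1 / t)`, which is
`exp (H t)` with `H t = log t - (1 + 1/t) log (1 + t)`. Since `H' t = log (1 + t) / t² > 0`, `H` is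
strictly increasing; `H t ≤ log t` gives `H → -∞` as `t → 0⁺`, and
`H t = -(log (t + 1) - log t) - log (1 + t) / t` gives `H → 0` as `t → ∞`. The unique solution of
`F Q = 2ε` then comes from the intermediate value theorem and strict monotonicity.
-/

open Real Filter Set Topology

noncomputable def logProfile (t : ℝ) : ℝ := log t - (1 + t⁻¹) * log (1 + t)

lemma hasDerivAt_logProfile {t : ℝ} (ht : 0 < t) :
    HasDerivAt logProfile (log (1 + t) / t ^ 2) t := by
  have hlog : HasDerivAt (fun s => log (1 + s)) (1 + t)⁻¹ t := by
    simpa using ((hasDerivAt_id t).const_add 1).log (by positivity)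
  have h : HasDerivAt logProfile (t⁻¹ - (-(t ^ 2)⁻¹ * log (1 + t) + (1 + t⁻¹) * (1 + t)⁻¹)) t :=
    (hasDerivAt_log ht.ne').sub (((hasDerivAt_inv ht.ne').const_add 1).mul hlog)
  convert h using 1
  field_simp
  ring

lemma continuousOn_logProfile : ContinuousOn logProfile (Ioi 0) :=
  fun _ ht => (hasDerivAt_logProfile ht).continuousAt.continuousWithinAt

lemma strictMonoOn_logProfile : StrictMonoOn logProfile (Ioi 0) := by
  refine strictMonoOn_of_hasDerivWithinAt_pos (f' := fun t => log (1 + t) / t ^ 2) (convex_Ioi 0)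
    continuousOn_logProfile (fun t ht => ?_) (fun t ht => ?_)
  · rw [interior_Ioi] at ht
    exact (hasDerivAt_logProfile ht).hasDerivWithinAt
  · rw [interior_Ioi] at ht
    have : 0 < t := ht
    have : 0 < log (1 + t) := log_pos (by linarith)
    positivity

lemma logProfile_le_log {t : ℝ} (ht : 0 < t) : logProfile t ≤ log t := by
  have : 0 ≤ (1 + t⁻¹) * log (1 + t) := by
    have : 0 ≤ log (1 + t) := log_nonneg (by linarith)
    positivity
  rw [logProfile]
  linarith

lemma tendsto_logProfile_nhdsGT_zero : Tendsto logProfile (𝓝[>] 0) atBot :=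
  tendsto_atBot_mono' _ (eventually_mem_nhdsWithin.mono fun _ ht => logProfile_le_log ht)
    tendsto_log_nhdsGT_zero

lemma tendsto_log_one_add_div_self_atTop :
    Tendsto (fun t => log (1 + t) / t) atTop (𝓝 0) := by
  refine ((tendsto_pow_log_div_mul_add_atTop 1 (-1) 1 one_ne_zero).comp
    (tendsto_atTop_add_const_left atTop 1 tendsto_id)).congr fun t => ?_
  simp

lemma tendsto_logProfile_atTop : Tendsto logProfile atTop (𝓝 0) := by
  have h := (tendsto_log_comp_add_sub_log 1).neg.sub tendsto_log_one_add_div_self_atTop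
  rw [neg_zero, sub_zero] at h
  refine h.congr' ((eventually_gt_atTop 0).mono fun t ht => ?_)
  rw [logProfile, add_comm t]
  field_simp
  ring

lemma div_one_add_mul_rpow_eq_exp_logProfile {t : ℝ} (ht : 0 < t) :
    t / (1 + t) * (1 + t) ^ (-1 / t) = exp (logProfile t) := by
  have h1t : 0 < 1 + t := by linarith
  rw [logProfile, exp_sub, exp_log ht, mul_comm (1 + t⁻¹), ← rpow_def_of_pos h1t, rpow_add h1t,
    rpow_one, neg_div, rpow_neg h1t.le, one_div]
  field_simp

lemma one_sub_div_mul_rpow_eq_exp_logProfile {a c Q : ℝ} (ha : 0 < a) (hc : 0 < c) (hQ : 0 < Q) :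
    (1 - c / (c + a * Q)) * (1 + a * Q / c) ^ (-c / (a * Q)) = exp (logProfile (a / c * Q)) := by
  have ht : 0 < a / c * Q := by positivity
  rw [← div_one_add_mul_rpow_eq_exp_logProfile ht]
  congr 1
  · field_simp
    ring
  · rw [div_mul_eq_mul_div]
    congr 1
    field_simp

lemma StrictMonoOn.existsUnique_eq_of_tendsto {α β : Type*} [ConditionallyCompleteLinearOrder α]
    [TopologicalSpace α] [OrderTopology α] [DenselyOrdered α] [NoMaxOrder α] [LinearOrder β]
    [TopologicalSpace β] [OrderClosedTopology β] {f : α → β} {c : α} {a b y : β}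
    (hf : StrictMonoOn f (Ioi c)) (hcont : ContinuousOn f (Ioi c))
    (hlo : Tendsto f (𝓝[>] c) (𝓝 a)) (hhi : Tendsto f atTop (𝓝 b)) (hy : y ∈ Ioo a b) :
    ∃! x, c < x ∧ f x = y := by
  obtain ⟨x₁, hx₁y, hx₁⟩ := ((hlo.eventually_lt_const hy.1).and self_mem_nhdsWithin).exists
  obtain ⟨x₂, hyx₂, hx₂⟩ := ((hhi.eventually_const_lt hy.2).and (eventually_gt_atTop c)).exists
  obtain ⟨x, hx, rfl⟩ := hcont.surjOn_Icc hx₁ hx₂ ⟨hx₁y.le, hyx₂.le⟩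
  exact ⟨x, ⟨hx, rfl⟩, fun x' ⟨hx', hfx'⟩ => hf.injOn hx' hx hfx'⟩

theorem F_props (φ μ σ : ℝ) (hφ : 0 < φ) (hμ : 0 < μ) (hσ : 0 < σ)
    (F : ℝ → ℝ)
    (hF : ∀ Q : ℝ, F Q = (1 - φ * μ * σ / (φ * μ * σ + (φ * μ + 1) * Q)) *
      (1 + (φ * μ + 1) * Q / (φ * μ * σ)) ^ (-(φ * μ * σ) / ((φ * μ + 1) * Q))) :
    StrictMonoOn F (Set.Ioi 0) ∧
    Filter.Tendsto F (nhdsWithin 0 (Set.Ioi 0)) (nhds 0) ∧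
    Filter.Tendsto F Filter.atTop (nhds 1) ∧
    ∀ ε ∈ Set.Ioo (0 : ℝ) (1 / 2), ∃! Q : ℝ, 0 < Q ∧ F Q = 2 * ε := by
  set k := (φ * μ + 1) / (φ * μ * σ)
  have hk : 0 < k := by positivity
  have hF' : EqOn F (fun Q => exp (logProfile (k * Q))) (Ioi 0) := fun Q hQ =>
    (hF Q).trans (one_sub_div_mul_rpow_eq_exp_logProfile (by positivity) (by positivity) hQ)
  have hscale : MapsTo (k * ·) (Ioi 0) (Ioi 0) := fun Q hQ => mul_pos hk hQ
  have hmono : StrictMonoOn F (Ioi 0) := fun x hx y hy hxy => by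
    rw [hF' hx, hF' hy, exp_lt_exp]
    exact strictMonoOn_logProfile (hscale hx) (hscale hy) (mul_lt_mul_of_pos_left hxy hk)
  have hcont : ContinuousOn F (Ioi 0) :=
    (continuous_exp.comp_continuousOn
      (continuousOn_logProfile.comp (continuous_const_mul k).continuousOn hscale)).congr hF'
  have hzero : Tendsto F (𝓝[>] 0) (𝓝 0) := by
    have hk0 : Tendsto (k * ·) (𝓝[>] 0) (𝓝[>] 0) := by
      simpa only [comap_mulLeft_nhdsGT_zero hk] using tendsto_comap (f := (k * ·)) (x := 𝓝[>] 0)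
    exact (tendsto_exp_atBot.comp (tendsto_logProfile_nhdsGT_zero.comp hk0)).congr'
      (eventually_mem_nhdsWithin.mono fun Q hQ => (hF' hQ).symm)
  have hone : Tendsto F atTop (𝓝 1) := by
    have h := (continuous_exp.tendsto 0).comp
      (tendsto_logProfile_atTop.comp (tendsto_id.const_mul_atTop hk))
    rw [exp_zero] at h
    exact h.congr' ((eventually_gt_atTop 0).mono fun Q hQ => (hF' hQ).symm)
  refine ⟨hmono, hzero, hone, fun ε hε => hmono.existsUnique_eq_of_tendsto hcont hzero hone ?_⟩
  constructor <;> linarith [hε.1, hε.2]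
end
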